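/- Let K be a finite lattice-convex subset of ℤ² whose affine hull is all of ℝ², put m := m(K) and δ := δ(K), and assume m ≥ δ² + δ + 1. Then there exists a positive integer n with δ ≤ n ≤ (m − 1)/δ such that: whenever u, v, w are mutually nonparallel vectors that either all belong to U(K) ∪ U(−K), or are all primitive vectors parallel to edges of the convex hull of K, one has n·u = α v + β w for real numbers α, β satisfying 1 ≤ |α| ≤ m − 1 and 1 ≤ |β| ≤ m − 1. -/

import Mathlib

open scoped Pointwise ENNReal

noncomputable section

abbrev Z2 : Type := ℤ × ℤ
abbrev R2 : Type := ℝ × ℝ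

/-- The canonical embedding of `ℤ²` into `ℝ²`. -/
def toR (p : Z2) : R2 := ((p.1 : ℝ), (p.2 : ℝ))

/-- The standard scalar product on `ℝ²`. -/
def dotR (x y : R2) : ℝ := x.1 * y.1 + x.2 * y.2

/-- The covariogram of a set `K ⊆ ℤ²`: `u ↦ |K ∩ (K + u)|`. -/
def cov (K : Set Z2) (u : Z2) : ℕ := (K ∩ ((fun x => x + u) '' K)).ncard

/-- `K ⊆ ℤ²` is lattice-convex if it is the intersection of `ℤ²` with a convex set. -/
def latticeConvex (K : Set Z2) : Prop := ∃ C : Set R2, Convex ℝ C ∧ K = toR ⁻¹' C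

/-- The affine hull of `K` is all of `ℝ²`. -/
def spans (K : Set Z2) : Prop := affineSpan ℝ (toR '' K) = ⊤

/-- `L ∈ [K]`: `L` is a translate of `K` or a translate of `−K`. -/
def sameClass (K L : Set Z2) : Prop :=
  ∃ t : Z2, L = (fun x => x + t) '' K ∨ L = (fun x => t - x) '' K

/-- The support set `F(K,u)` of `K` in direction `u ∈ ℝ²`. -/
def suppSet (K : Set Z2) (u : R2) : Set Z2 :=
  {x ∈ K | ∀ y ∈ K, dotR (toR y) u ≤ dotR (toR x) u}

/-- A vector of `ℤ²` is primitive if the gcd of its coordinates is `1`. -/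
def primitive (u : Z2) : Prop := Int.gcd u.1 u.2 = 1

/-- `u ≠ 0` is an outer normal of an edge of `K` if `F(K,u)` has more than one point. -/
def isEdge (K : Set Z2) (u : Z2) : Prop := u ≠ 0 ∧ 1 < (suppSet K (toR u)).ncard

/-- `U(K)`: primitive outer normals of edges of `K`. -/
def normals (K : Set Z2) : Set Z2 := {u | primitive u ∧ isEdge K u}

/-- `−K`. -/
def negSet (K : Set Z2) : Set Z2 := (fun x => -x) '' K

/-- `m'(K) = min {|F(K,u)| : u ∈ U(K)}` (with `min ∅ = ∞`). -/
def mOne (K : Set Z2) : ℝ≥0∞ := ⨅ u ∈ normals K, ((suppSet K (toR u)).ncard : ℝ≥0∞)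

/-- `m''(K) = min {|F(K,u)| − |F(K,−u)| + 1 : u ≠ 0, |F(K,u)| > |F(K,−u)| > 1}`. -/
def mTwo (K : Set Z2) : ℝ≥0∞ :=
  ⨅ u ∈ {u : Z2 | u ≠ 0 ∧ 1 < (suppSet K (toR (-u))).ncard ∧
      (suppSet K (toR (-u))).ncard < (suppSet K (toR u)).ncard},
    (((suppSet K (toR u)).ncard - (suppSet K (toR (-u))).ncard + 1 : ℕ) : ℝ≥0∞)

/-- `m(K) = min {m'(K), m''(K)}`. -/
def mm (K : Set Z2) : ℝ≥0∞ := min (mOne K) (mTwo K)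

/-- Determinant of the 2×2 matrix with columns `u`, `v`. -/
def detZ (u v : Z2) : ℤ := u.1 * v.2 - u.2 * v.1

/-- `D(U) = {|det(u₁,u₂)| : u₁, u₂ ∈ U} \ {0}`. -/
def Dset (U : Set Z2) : Set ℝ≥0∞ :=
  {d | d ≠ 0 ∧ ∃ u ∈ U, ∃ v ∈ U, d = ((detZ u v).natAbs : ℝ≥0∞)}

/-- The discrepancy `δ(U) = max D(U) / min D(U)`. -/
def disc (U : Set Z2) : ℝ≥0∞ := sSup (Dset U) / sInf (Dset U)

/-- `δ(K) = δ(U(K))`. -/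
def discK (K : Set Z2) : ℝ≥0∞ := disc (normals K)

/-- Two vectors of `ℝ²` are parallel (linearly dependent). -/
def Parallel2 (x w : R2) : Prop := x.1 * w.2 = x.2 * w.1

/-- Two vectors of `ℤ²` are parallel (linearly dependent). -/
def ParallelZ (u v : Z2) : Prop := u.1 * v.2 = u.2 * v.1

/-- A polyhedron in `ℝ²`: an intersection of finitely many closed halfplanes. -/
def IsPolyhedron (P : Set R2) : Prop :=
  ∃ H : Finset (R2 × ℝ), P = ⋂ h ∈ H, {x : R2 | dotR x h.1 ≤ h.2}

/-- `E` is an edge (one-dimensional face) of the polyhedron `P`: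
a convex extreme subset of `P` with at least two points that is contained in a line. -/
def IsPolyEdge (P E : Set R2) : Prop :=
  IsExtreme ℝ P E ∧ Convex ℝ E ∧ (∃ p ∈ E, ∃ q ∈ E, p ≠ q) ∧
    ∃ a d : R2, ∀ x ∈ E, ∃ t : ℝ, x = a + t • d

/-- Every edge of `P` is parallel to some vector of `W`. -/
def edgesParallelTo (P : Set R2) (W : Set Z2) : Prop :=
  ∀ E : Set R2, IsPolyEdge P E → ∃ w ∈ W, ∀ p ∈ E, ∀ q ∈ E, Parallel2 (p - q) (toR w)

/-- `u` is parallel to an edge of the convex hull of `K`. -/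
def parEdgeHull (K : Set Z2) (u : Z2) : Prop :=
  ∃ E : Set R2, IsPolyEdge (convexHull ℝ (toR '' K)) E ∧
    ∀ p ∈ E, ∀ q ∈ E, Parallel2 (p - q) (toR u)

/-- The conical hull of a set in `ℝ²`. -/
def coneHull (s : Set R2) : Set R2 :=
  {x | ∃ c : ℝ, 0 ≤ c ∧ ∃ y ∈ convexHull ℝ s, x = c • y}

/-- The supporting cone `S(K,v) = cone (K − v)`. -/
def suppCone (K : Set Z2) (v : Z2) : Set R2 :=
  coneHull ((fun x => toR x - toR v) '' K)

/-- `v` is a vertex of `K`: a support set of `K` consisting of exactly one point. -/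
def isVertex (K : Set Z2) (v : Z2) : Prop := ∃ u : R2, u ≠ 0 ∧ suppSet K u = {v}

/-- A set is centrally symmetric if it is a translate of its reflection. -/
def centSym (A : Set Z2) : Prop := ∃ t : Z2, A = (fun x => t - x) '' A

/-- The Minkowski sum of `S` and `T` is direct. -/
def directSum (S T : Set Z2) : Prop :=
  ∀ s ∈ S, ∀ s' ∈ S, ∀ t ∈ T, ∀ t' ∈ T, s + t = s' + t' → s = s' ∧ t = t'

/-- `T₁ = {0,…,k} × {0}`. -/
def T1set (k : ℤ) : Set Z2 := {p | 0 ≤ p.1 ∧ p.1 ≤ k ∧ p.2 = 0}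

/-- `T₂ = {0,…,ℓ} × {1}`. -/
def T2set (l : ℤ) : Set Z2 := {p | 0 ≤ p.1 ∧ p.1 ≤ l ∧ p.2 = 1}

/-- `T = ({0,…,k} × {0}) ∪ ({0,…,ℓ} × {1})`. -/
def Tset (k l : ℤ) : Set Z2 := T1set k ∪ T2set l

def wOne (k : ℤ) : Z2 := (-k - 1, 1)
def wTwo (l : ℤ) : Z2 := (l + 1, 1)

/-- The lattice `𝕃 = ℤw₁ + ℤw₂`. -/
def ZLat (k l : ℤ) : Set Z2 := {p | ∃ a b : ℤ, p = a • wOne k + b • wTwo l}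

/-- `S` is lattice-convex with respect to the lattice `Λ`. -/
def latticeConvexIn (Λ S : Set Z2) : Prop := ∃ C : Set R2, Convex ℝ C ∧ S = Λ ∩ toR ⁻¹' C

/-- The translate `s + A`. -/
def transl (s : Z2) (A : Set Z2) : Set Z2 := (fun x => s + x) '' A

/-- The horizontal section `I_h` of `K` at height `h`. -/
def sect (K : Set Z2) (h : ℤ) : Set Z2 := {p ∈ K | p.2 = h}

/-- `𝒯(h)`: the members of `𝒯₁ ∪ 𝒯₂` contained in `I_h`. -/
def TcalSet (k l : ℤ) (S : Set Z2) (h : ℤ) : Set (Set Z2) :=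
  {J | (∃ s ∈ S, J = transl s (T1set k) ∨ J = transl s (T2set l)) ∧ J ⊆ sect (S + Tset k l) h}

/-- `J` strictly precedes `J'` in the left-to-right order. -/
def precedes (J J' : Set Z2) : Prop := ∀ p ∈ J, ∀ q ∈ J', p.1 < q.1

/-- Adjacency in the graph `G_S`. -/
def adjStep (k l : ℤ) (S : Set Z2) (a b : Z2) : Prop :=
  a ∈ S ∧ b ∈ S ∧
    (b - a = wOne k ∨ b - a = -(wOne k) ∨ b - a = wTwo l ∨ b - a = -(wTwo l) ∨
      (k = l + 1 ∧ (b - a = wOne k + wTwo l ∨ b - a = -(wOne k + wTwo l))))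

/-- The graph `G_S` is connected. -/
def GConnected (k l : ℤ) (S : Set Z2) : Prop :=
  ∀ s ∈ S, ∀ s' ∈ S, Relation.ReflTransGen (adjStep k l S) s s'

end

/-!
Take `n = ⌊δ⌋ + 1`, so that `δ ≤ n ≤ δ + 1` and `n δ ≤ δ² + δ ≤ m - 1`. Cramer's rule
`det(v,w) u = det(u,w) v + det(v,u) w` gives `α = n det(u,w) / det(v,w)` and
`β = n det(v,u) / det(v,w)`. Up to sign, and up to a common quarter turn (which preserves
determinants), `u, v, w` are outer normals of edges of `K`, so every one of these determinants
lies between `min D(U(K))` and `max D(U(K))`; hence `|α|` and `|β|` lie between `n / δ ≥ 1` and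
`n δ ≤ m - 1`.

The quarter turn of an edge direction of `conv K` is an outer normal of `K`: the midpoint of the
edge is a boundary point of the (full-dimensional) hull, Hahn–Banach gives a supporting line
there, and by Krein–Milman this line meets `K` in at least two points.
-/

open Set

def rotZ (u : Z2) : Z2 := (-u.2, u.1)

lemma detZ_rotZ (u v : Z2) : detZ (rotZ u) (rotZ v) = detZ u v := by
  simp only [detZ, rotZ]; ring

lemma detZ_swap (u v : Z2) : detZ v u = -detZ u v := by
  simp only [detZ]; ring

lemma detZ_eq_zero_iff {u v : Z2} : detZ u v = 0 ↔ ParallelZ u v := by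
  simp [ParallelZ, detZ, sub_eq_zero]

lemma natAbs_detZ_neg_left (u v : Z2) : (detZ (-u) v).natAbs = (detZ u v).natAbs := by
  simp only [detZ, Prod.fst_neg, Prod.snd_neg, neg_mul, ← neg_sub', Int.natAbs_neg]

lemma natAbs_detZ_neg_right (u v : Z2) : (detZ u (-v)).natAbs = (detZ u v).natAbs := by
  rw [detZ_swap, Int.natAbs_neg, natAbs_detZ_neg_left, detZ_swap, Int.natAbs_neg]

@[simp]
lemma primitive_neg_iff {u : Z2} : primitive (-u) ↔ primitive u := by
  simp [primitive, Int.gcd]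

lemma primitive_rotZ {u : Z2} (h : primitive u) : primitive (rotZ u) := by
  simpa [primitive, rotZ, Int.gcd, Nat.gcd_comm] using h

lemma primitive.ne_zero {u : Z2} (h : primitive u) : u ≠ 0 := by
  rintro rfl
  simp [primitive] at h

lemma toR_neg (p : Z2) : toR (-p) = -toR p := by simp [toR]

lemma dotR_toR (x v : Z2) : dotR (toR x) (toR v) = ((x.1 * v.1 + x.2 * v.2 : ℤ) : ℝ) := by
  simp [dotR, toR]

lemma toR_ne_zero {u : Z2} (hu : u ≠ 0) : toR u ≠ 0 := by
  contrapose! hu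
  simp only [toR, Prod.mk_eq_zero, Int.cast_eq_zero] at hu
  exact Prod.ext hu.1 hu.2

lemma detZ_smul_toR (u v w : Z2) :
    (detZ v w : ℝ) • toR u = (detZ u w : ℝ) • toR v + (detZ v u : ℝ) • toR w := by
  ext <;> simp [detZ, toR] <;> ring

lemma suppSet_neg (K : Set Z2) (a : R2) : suppSet (-K) a = -suppSet K (-a) := by
  ext x
  simp [suppSet, dotR, toR]

lemma normals_negSet (K : Set Z2) : normals (negSet K) = -normals K := by
  ext u
  simp only [negSet, image_neg_eq_neg, normals, isEdge, mem_neg, mem_ofPred_eq, suppSet_neg,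
    ncard_neg, ← toR_neg, primitive_neg_iff, neg_ne_zero]

lemma dotR_eq_of_mem_suppSet {K : Set Z2} {a : R2} {x y : Z2} (hx : x ∈ suppSet K a)
    (hy : y ∈ suppSet K a) : dotR (toR x) a = dotR (toR y) a :=
  le_antisymm (hy.2 x hx.1) (hx.2 y hy.1)

lemma abs_le_abs_of_isCoprime_of_orthogonal {a b c e : ℤ} (hab : IsCoprime a b)
    (h : a * c + b * e = 0) (hce : (c, e) ≠ 0) : |a| ≤ |e| := by
  rcases eq_or_ne e 0 with rfl | he
  · have hc : c ≠ 0 := fun hc => hce (by rw [hc]; rfl)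
    simp [(mul_eq_zero.1 (by simpa using h)).resolve_right hc]
  · have : a ∣ e := hab.dvd_of_dvd_mul_left ⟨-c, by linear_combination h⟩
    exact Int.le_of_dvd (abs_pos.2 he) ((abs_dvd_abs _ _).2 this)

lemma abs_le_of_primitive_of_orthogonal {u d : Z2} (hu : primitive u) (hd : d ≠ 0)
    (h : u.1 * d.1 + u.2 * d.2 = 0) : |u.1| ≤ |d.2| ∧ |u.2| ≤ |d.1| := by
  have hcop : IsCoprime u.1 u.2 := Int.isCoprime_iff_gcd_eq_one.2 hu
  refine ⟨abs_le_abs_of_isCoprime_of_orthogonal hcop h hd,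
    abs_le_abs_of_isCoprime_of_orthogonal (c := d.2) hcop.symm (by linear_combination h) ?_⟩
  simpa [Prod.ext_iff, and_comm] using hd

lemma normals_finite {K : Set Z2} (hK : K.Finite) : (normals K).Finite := by
  let box (d : Z2) : Set Z2 := Icc (-|d.2|, -|d.1|) (|d.2|, |d.1|)
  have hfin : (⋃ pq ∈ K ×ˢ K, box (pq.1 - pq.2)).Finite :=
    (hK.prod hK).biUnion fun _ _ => finite_Icc _ _
  refine hfin.subset ?_
  rintro u ⟨hu, -, hcard⟩
  obtain ⟨p, q, hp, hq, hpq⟩ := (one_lt_ncard_iff (hK.subset fun _ h => h.1)).1 hcard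
  have horth : u.1 * (p - q).1 + u.2 * (p - q).2 = 0 := by
    have := dotR_eq_of_mem_suppSet hp hq
    rw [dotR_toR, dotR_toR, Int.cast_inj] at this
    simp only [Prod.fst_sub, Prod.snd_sub]
    linear_combination this
  obtain ⟨h1, h2⟩ := abs_le_of_primitive_of_orthogonal hu (sub_ne_zero.2 hpq) horth
  exact mem_biUnion (x := (p, q)) ⟨hp.1, hq.1⟩
    ⟨Prod.mk_le_mk.2 ⟨neg_le_of_abs_le h1, neg_le_of_abs_le h2⟩,
      Prod.mk_le_mk.2 ⟨le_of_abs_le h1, le_of_abs_le h2⟩⟩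

lemma natAbs_detZ_mem_Dset {U : Set Z2} {x y : Z2} (hx : x ∈ U ∪ -U) (hy : y ∈ U ∪ -U)
    (hxy : detZ x y ≠ 0) : ((detZ x y).natAbs : ℝ≥0∞) ∈ Dset U := by
  refine ⟨by simpa using hxy, ?_⟩
  rcases hx with hx | hx <;> rcases hy with hy | hy
  · exact ⟨x, hx, y, hy, rfl⟩
  · exact ⟨x, hx, -y, hy, by rw [natAbs_detZ_neg_right]⟩
  · exact ⟨-x, hx, y, hy, by rw [natAbs_detZ_neg_left]⟩
  · exact ⟨-x, hx, -y, hy, by rw [natAbs_detZ_neg_left, natAbs_detZ_neg_right]⟩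

lemma Dset_finite {U : Set Z2} (hU : U.Finite) : (Dset U).Finite :=
  ((hU.prod hU).image fun uv => ((detZ uv.1 uv.2).natAbs : ℝ≥0∞)).subset
    fun _ ⟨_, u, hu, v, hv, hd⟩ => ⟨(u, v), ⟨hu, hv⟩, hd.symm⟩

lemma two_le_mm (K : Set Z2) : 2 ≤ mm K := by
  refine le_min (le_iInf₂ fun u hu => ?_) (le_iInf₂ fun u hu => ?_)
  · exact_mod_cast hu.2.2
  · obtain ⟨-, h1, h2⟩ := hu
    exact_mod_cast (by omega : 2 ≤ (suppSet K (toR u)).ncard - (suppSet K (toR (-u))).ncard + 1)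

open Filter Topology in
lemma IsExtreme.exists_add_smul_mem {E : Type*} [NormedAddCommGroup E] [NormedSpace ℝ E]
    {A B : Set E} (hAB : IsExtreme ℝ A B) {z : E} (hzB : z ∈ B) (hzA : z ∈ interior A)
    (v : E) :
    ∃ ε : ℝ, 0 < ε ∧ z + ε • v ∈ B := by
  have hA : ∀ᶠ t : ℝ in 𝓝 0, z + t • v ∈ A := by
    have : Tendsto (fun t : ℝ => z + t • v) (𝓝 0) (𝓝 z) :=
      (continuous_const.add (continuous_id.smul continuous_const)).tendsto' 0 z (by simp)
    exact this (mem_interior_iff_mem_nhds.1 hzA)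
  obtain ⟨ε, hε, hball⟩ := Metric.eventually_nhds_iff.1 hA
  have hmem : ∀ t : ℝ, |t| < ε → z + t • v ∈ A := fun t ht => hball (by simpa using ht)
  refine ⟨ε / 2, half_pos hε,
    hAB.left_mem_of_mem_openSegment (hmem _ ?_) (hmem (-(ε / 2)) ?_) hzB ?_⟩
  · rw [abs_of_pos (half_pos hε)]; linarith
  · rw [abs_neg, abs_of_pos (half_pos hε)]; linarith
  · exact ⟨1 / 2, 1 / 2, by norm_num, by norm_num, by norm_num, by module⟩

/-- By Krein–Milman, the extreme points of an exposed face `B` span `B`, and they lie in `V`. -/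
lemma Set.Finite.nontrivial_inter_of_isExposed_convexHull {E : Type*} [NormedAddCommGroup E]
    [NormedSpace ℝ E] {V B : Set E} (hV : V.Finite) (hB : IsExposed ℝ (convexHull ℝ V) B)
    (hBnt : B.Nontrivial) : (V ∩ B).Nontrivial := by
  by_contra h
  have hext : (B.extremePoints ℝ).Subsingleton := (not_nontrivial_iff.1 h).anti fun x hx =>
    ⟨extremePoints_convexHull_subset (hB.isExtreme.extremePoints_subset_extremePoints hx), hx.1⟩
  have hKM := closure_convexHull_extremePoints (hB.isCompact (hV.isCompact_convexHull ℝ))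
    (hB.convex (convex_convexHull ℝ V))
  refine hBnt.not_subsingleton ?_
  rw [← hKM]
  rcases hext.eq_empty_or_singleton with h | ⟨x, h⟩ <;> simp [h]

lemma Parallel2.exists_eq_smul {d w : R2} (h : Parallel2 d w) (hd : d ≠ 0) :
    ∃ s : ℝ, w = s • d := by
  unfold Parallel2 at h
  rcases eq_or_ne d.1 0 with h1 | h1
  · have h2 : d.2 ≠ 0 := fun h2 => hd (Prod.ext h1 h2)
    refine ⟨w.2 / d.2, Prod.ext ?_ ?_⟩ <;> simp only [Prod.smul_fst, Prod.smul_snd, smul_eq_mul]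
    · rw [h1, mul_zero]; simpa [h1, h2] using h
    · field_simp
  · refine ⟨w.1 / d.1, Prod.ext ?_ ?_⟩ <;>
      simp only [Prod.smul_fst, Prod.smul_snd, smul_eq_mul]
    · field_simp
    · field_simp; linear_combination h

lemma sq_add_sq_pos {w : R2} (hw : w ≠ 0) : 0 < w.1 ^ 2 + w.2 ^ 2 := by
  simp only [ne_eq, Prod.ext_iff, Prod.fst_zero, Prod.snd_zero, not_and_or] at hw
  rcases hw with h | h <;> positivity

lemma dotR_neg_right (x y : R2) : dotR x (-y) = -dotR x y := by
  simp only [dotR, Prod.fst_neg, Prod.snd_neg]; ring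

lemma exists_eq_pos_mul_dotR_rotZ {f : StrongDual ℝ R2} (hf : f ≠ 0) {u : Z2} (hu : u ≠ 0)
    (hfu : f (toR u) = 0) :
    ∃ w, (w = rotZ u ∨ w = -rotZ u) ∧ ∃ t > 0, ∀ x, f x = t * dotR x (toR w) := by
  have hfx : ∀ x : R2, f x = x.1 * f (1, 0) + x.2 * f (0, 1) := fun x => by
    conv_lhs => rw [show x = x.1 • ((1 : ℝ), (0 : ℝ)) + x.2 • ((0 : ℝ), (1 : ℝ)) by
      ext <;> simp]
    simp only [map_add, map_smul, smul_eq_mul]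
  rw [hfx] at hfu
  simp only [toR] at hfu
  set N : ℝ := (u.1 : ℝ) ^ 2 + (u.2 : ℝ) ^ 2
  have hN : 0 < N := sq_add_sq_pos (toR_ne_zero hu)
  set s : ℝ := u.1 * f (0, 1) - u.2 * f (1, 0)
  have hs : ∀ x, f x = s / N * dotR x (toR (rotZ u)) := fun x => by
    rw [hfx, div_mul_eq_mul_div, eq_div_iff hN.ne']
    simp only [dotR, toR, rotZ, Int.cast_neg, N, s]
    linear_combination (x.1 * u.1 + x.2 * u.2) * hfu
  have hs0 : s ≠ 0 := fun h0 => hf (ContinuousLinearMap.ext fun x => by simp [hs x, h0])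
  rcases hs0.lt_or_gt with hneg | hpos
  · refine ⟨-rotZ u, Or.inr rfl, -s / N, div_pos (neg_pos.2 hneg) hN, fun x => ?_⟩
    rw [hs, toR_neg, dotR_neg_right]; ring
  · exact ⟨rotZ u, Or.inl rfl, s / N, div_pos hpos hN, hs⟩

lemma IsPolyEdge.exists_supporting {P E : Set R2} (hP : Convex ℝ P)
    (hPint : (interior P).Nonempty) (hE : IsPolyEdge P E) {w : R2} (hw : w ≠ 0)
    (hpar : ∀ p ∈ E, ∀ q ∈ E, Parallel2 (p - q) w) :
    ∃ f : StrongDual ℝ R2, f ≠ 0 ∧ f w = 0 ∧ (f.toExposed P).Nontrivial := by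
  obtain ⟨hext, hconv, ⟨p, hp, q, hq, hpq⟩, -⟩ := hE
  set z : R2 := (1 / 2 : ℝ) • p + (1 / 2 : ℝ) • q
  have hz : z ∈ E := hconv hp hq (by norm_num) (by norm_num) (by norm_num)
  have hzint : z ∉ interior P := by
    intro hzint
    obtain ⟨ε, hε, hmem⟩ := hext.exists_add_smul_mem hz hzint (-w.2, w.1)
    have h := hpar _ hmem _ hz
    simp only [Parallel2, add_sub_cancel_left, Prod.smul_fst, Prod.smul_snd, smul_eq_mul] at h
    nlinarith [sq_add_sq_pos hw]
  obtain ⟨f, c, hf0, hfP, hfz⟩ := geometric_hahn_banach_of_nonempty_interior hP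
    (convex_singleton z) (disjoint_singleton_right.2 hzint) hPint (singleton_nonempty z)
  have hcz := hfz z rfl
  have hfpq : f z = (f p + f q) / 2 := by simp only [z, map_add, map_smul, smul_eq_mul]; ring
  have hfp : f p = c := by linarith [hfP p (hext.subset hp), hfP q (hext.subset hq)]
  have hfq : f q = c := by linarith [hfP p (hext.subset hp), hfP q (hext.subset hq)]
  have hmax : ∀ x ∈ E, f x = c → x ∈ f.toExposed P := fun x hx hfx =>
    ⟨hext.subset hx, fun y hy => hfx ▸ hfP y hy⟩
  obtain ⟨s, hs⟩ := (hpar p hp q hq).exists_eq_smul (sub_ne_zero.2 hpq)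
  refine ⟨f, hf0, ?_, p, hmax p hp hfp, q, hmax q hq hfq, hpq⟩
  rw [hs, map_smul, map_sub, hfp, hfq, sub_self, smul_zero]

lemma mem_normals_of_nontrivial_toExposed {K : Set Z2} (hK : K.Finite) {w : Z2}
    (hw : primitive w) {f : StrongDual ℝ R2} {t : ℝ} (ht : 0 < t)
    (hf : ∀ x, f x = t * dotR x (toR w))
    (hF : (f.toExposed (convexHull ℝ (toR '' K))).Nontrivial) :
    w ∈ normals K := by
  obtain ⟨_, ⟨⟨a, ha, rfl⟩, haF⟩, _, ⟨⟨b, hb, rfl⟩, hbF⟩, hab⟩ :=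
    (hK.image toR).nontrivial_inter_of_isExposed_convexHull
      ContinuousLinearMap.toExposed.isExposed hF
  have hsupp : ∀ x ∈ K, toR x ∈ f.toExposed (convexHull ℝ (toR '' K)) →
      x ∈ suppSet K (toR w) := fun x hx hxF =>
    ⟨hx, fun y hy => le_of_mul_le_mul_left
      (by simpa only [hf] using hxF.2 _ (subset_convexHull ℝ _ (mem_image_of_mem toR hy))) ht⟩
  exact ⟨hw, hw.ne_zero, (one_lt_ncard_iff (hK.subset fun _ h => h.1)).2
    ⟨a, b, hsupp a ha haF, hsupp b hb hbF, fun h => hab (by rw [h])⟩⟩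

lemma rotZ_mem_normals_of_parEdgeHull {K : Set Z2} (hK : K.Finite) (hKspan : spans K) {u : Z2}
    (hu : primitive u) (he : parEdgeHull K u) : rotZ u ∈ normals K ∪ -normals K := by
  obtain ⟨E, hE, hpar⟩ := he
  have hPint : (interior (convexHull ℝ (toR '' K))).Nonempty := by
    rwa [(convex_convexHull ℝ _).interior_nonempty_iff_affineSpan_eq_top, affineSpan_convexHull]
  obtain ⟨f, hf0, hfu, hF⟩ :=
    hE.exists_supporting (convex_convexHull ℝ _) hPint (toR_ne_zero hu.ne_zero) hpar
  obtain ⟨w, hw, t, ht, hf⟩ := exists_eq_pos_mul_dotR_rotZ hf0 hu.ne_zero hfu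
  rcases hw with rfl | rfl
  · exact Or.inl (mem_normals_of_nontrivial_toExposed hK (primitive_rotZ hu) ht hf hF)
  · exact Or.inr (mem_neg.2 (mem_normals_of_nontrivial_toExposed hK
      (primitive_neg_iff.2 (primitive_rotZ hu)) ht hf hF))

lemma sInf_Dset_ne_zero (U : Set Z2) : sInf (Dset U) ≠ 0 := by
  refine (lt_of_lt_of_le zero_lt_one (le_sInf ?_)).ne'
  rintro _ ⟨hd0, u, -, v, -, rfl⟩
  exact_mod_cast Nat.one_le_iff_ne_zero.2 (by exact_mod_cast hd0)

lemma disc_ne_top {U : Set Z2} (hU : (Dset U).Finite) : disc U ≠ ⊤ := by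
  have hsup : sSup (Dset U) ≠ ⊤ := by
    rcases (Dset U).eq_empty_or_nonempty with h | h
    · simp [h]
    · obtain ⟨_, u, -, v, -, hd⟩ := h.csSup_mem hU
      rw [hd]; exact ENNReal.natCast_ne_top _
  simp [disc, ENNReal.div_eq_top, hsup, sInf_Dset_ne_zero]

lemma exists_nat_pos_le_le_add_one {δ : ℝ≥0∞} (hδ : δ ≠ ⊤) :
    ∃ n : ℕ, 0 < n ∧ δ ≤ n ∧ (n : ℝ≥0∞) ≤ δ + 1 := by
  lift δ to NNReal using hδ
  refine ⟨⌊δ⌋₊ + 1, Nat.succ_pos _, ?_, ?_⟩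
  · exact_mod_cast (Nat.lt_floor_add_one δ).le
  · exact_mod_cast add_le_add_left (Nat.floor_le δ.2) 1

lemma natCast_mul_le_sub_one {δ m : ℝ≥0∞} {n : ℕ} (hm : δ ^ 2 + δ + 1 ≤ m)
    (hn : (n : ℝ≥0∞) ≤ δ + 1) : n * δ ≤ m - 1 :=
  calc (n : ℝ≥0∞) * δ ≤ (δ + 1) * δ := mul_le_mul_left hn δ
    _ = δ ^ 2 + δ := by ring
    _ ≤ m - 1 := ENNReal.le_sub_of_add_le_right ENNReal.one_ne_top hm

lemma one_le_abs_and_ofReal_abs_le {D : Set ℝ≥0∞} {n : ℕ} {x y : ℤ} {M : ℝ≥0∞}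
    (hD : sInf D ≠ 0) (hx : (x.natAbs : ℝ≥0∞) ∈ D) (hy : (y.natAbs : ℝ≥0∞) ∈ D)
    (hn : sSup D / sInf D ≤ n) (hnM : n * (sSup D / sInf D) ≤ M) :
    1 ≤ |(n * x / y : ℝ)| ∧ ENNReal.ofReal |(n * x / y : ℝ)| ≤ M := by
  have hD' : sInf D ≠ ⊤ := ne_top_of_le_ne_top (ENNReal.natCast_ne_top _) (sInf_le hy)
  have hY : (0 : ℝ) < y.natAbs := by
    refine Nat.cast_pos.2 (Nat.pos_of_ne_zero fun h0 => hD (le_zero_iff.1 ?_))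
    simpa [h0] using sInf_le hy
  have habs : |(n * x / y : ℝ)| = ((n * x.natAbs : ℕ) : ℝ) / (y.natAbs : ℝ) := by
    rw [abs_div, abs_mul, Nat.abs_cast]; push_cast; simp [Nat.cast_natAbs]
  rw [habs, ENNReal.ofReal_div_of_pos hY, ENNReal.ofReal_natCast, ENNReal.ofReal_natCast]
  constructor
  · rw [one_le_div hY]
    have : (y.natAbs : ℝ≥0∞) ≤ n * x.natAbs := calc
      _ ≤ sSup D := le_sSup hy
      _ = sSup D / sInf D * sInf D := (ENNReal.div_mul_cancel hD hD').symm
      _ ≤ n * x.natAbs := mul_le_mul' hn (sInf_le hx)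
    exact_mod_cast this
  · calc ((n * x.natAbs : ℕ) : ℝ≥0∞) / y.natAbs ≤ n * sSup D / sInf D :=
          ENNReal.div_le_div (by push_cast; gcongr; exact le_sSup hx) (sInf_le hy)
      _ = n * (sSup D / sInf D) := mul_div_assoc ..
      _ ≤ M := hnM

lemma natCast_smul_toR_eq (n : ℕ) {u v w : Z2} (hvw : detZ v w ≠ 0) :
    (n : ℝ) • toR u =
      (n * detZ u w / detZ v w : ℝ) • toR v + (n * detZ v u / detZ v w : ℝ) • toR w := by
  have h := congrArg ((n / detZ v w : ℝ) • ·) (detZ_smul_toR u v w)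
  have hvw' : (detZ v w : ℝ) ≠ 0 := Int.cast_ne_zero.2 hvw
  simp only [smul_add, smul_smul, div_mul_cancel₀ _ hvw'] at h
  rw [h, div_mul_eq_mul_div, div_mul_eq_mul_div]

lemma natAbs_detZ_mem_Dset_of_triple {K : Set Z2} (hK : K.Finite) (hKspan : spans K)
    {u v w : Z2}
    (h : (u ∈ normals K ∪ normals (negSet K) ∧ v ∈ normals K ∪ normals (negSet K) ∧
            w ∈ normals K ∪ normals (negSet K)) ∨
          (primitive u ∧ primitive v ∧ primitive w ∧
            parEdgeHull K u ∧ parEdgeHull K v ∧ parEdgeHull K w))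
    {x y : Z2} (hx : x ∈ ({u, v, w} : Set Z2)) (hy : y ∈ ({u, v, w} : Set Z2))
    (hxy : detZ x y ≠ 0) : ((detZ x y).natAbs : ℝ≥0∞) ∈ Dset (normals K) := by
  suffices ∃ r : Z2 → Z2, (∀ x y, detZ (r x) (r y) = detZ x y) ∧
      ∀ x ∈ ({u, v, w} : Set Z2), r x ∈ normals K ∪ -normals K by
    obtain ⟨r, hr, hmem⟩ := this
    rw [← hr] at hxy ⊢
    exact natAbs_detZ_mem_Dset (hmem x hx) (hmem y hy) hxy
  rcases h with ⟨hu, hv, hw⟩ | ⟨hu, hv, hw, heu, hev, hew⟩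
  · rw [normals_negSet] at hu hv hw
    exact ⟨id, fun _ _ => rfl, by rintro x (rfl | rfl | rfl) <;> assumption⟩
  · refine ⟨rotZ, detZ_rotZ, ?_⟩
    rintro x (rfl | rfl | rfl)
    exacts [rotZ_mem_normals_of_parEdgeHull hK hKspan hu heu,
      rotZ_mem_normals_of_parEdgeHull hK hKspan hv hev,
      rotZ_mem_normals_of_parEdgeHull hK hKspan hw hew]

theorem exists_good_multiple_general
    (K : Set Z2) (hKfin : K.Finite) (hKspan : spans K)
    (hm : discK K ^ 2 + discK K + 1 ≤ mm K) :
    ∃ n : ℕ, 0 < n ∧ discK K ≤ (n : ℝ≥0∞) ∧ (n : ℝ≥0∞) ≤ (mm K - 1) / discK K ∧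
      ∀ u v w : Z2,
        ¬ ParallelZ u v → ¬ ParallelZ u w → ¬ ParallelZ v w →
        ((u ∈ normals K ∪ normals (negSet K) ∧ v ∈ normals K ∪ normals (negSet K) ∧
            w ∈ normals K ∪ normals (negSet K)) ∨
          (primitive u ∧ primitive v ∧ primitive w ∧
            parEdgeHull K u ∧ parEdgeHull K v ∧ parEdgeHull K w)) →
        ∃ α β : ℝ, (n : ℝ) • toR u = α • toR v + β • toR w ∧
          1 ≤ |α| ∧ ENNReal.ofReal |α| ≤ mm K - 1 ∧
          1 ≤ |β| ∧ ENNReal.ofReal |β| ≤ mm K - 1 := by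
  have hδ : discK K ≠ ⊤ := disc_ne_top (Dset_finite (normals_finite hKfin))
  obtain ⟨n, hn0, hδn, hnδ⟩ := exists_nat_pos_le_le_add_one hδ
  have hnM := natCast_mul_le_sub_one hm hnδ
  have hm1 : mm K - 1 ≠ 0 := fun h =>
    (ENNReal.one_lt_two.trans_le (two_le_mm K)).not_ge (tsub_eq_zero_iff_le.1 h)
  refine ⟨n, hn0, hδn, (ENNReal.le_div_iff_mul_le (Or.inr hm1) (Or.inl hδ)).2 hnM, ?_⟩
  intro u v w huv huw hvw htriple
  have hD {x y : Z2} (hx : x ∈ ({u, v, w} : Set Z2)) (hy : y ∈ ({u, v, w} : Set Z2))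
      (hxy : ¬ ParallelZ x y) :=
    natAbs_detZ_mem_Dset_of_triple hKfin hKspan htriple hx hy (mt detZ_eq_zero_iff.1 hxy)
  have hvu : ¬ ParallelZ v u := by
    rwa [← detZ_eq_zero_iff, detZ_swap, neg_eq_zero, detZ_eq_zero_iff]
  obtain ⟨hα₁, hα₂⟩ := one_le_abs_and_ofReal_abs_le (sInf_Dset_ne_zero _)
    (hD (by simp) (by simp) huw) (hD (by simp) (by simp) hvw) hδn hnM
  obtain ⟨hβ₁, hβ₂⟩ := one_le_abs_and_ofReal_abs_le (sInf_Dset_ne_zero _)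
    (hD (by simp) (by simp) hvu) (hD (by simp) (by simp) hvw) hδn hnM
  exact ⟨_, _, natCast_smul_toR_eq n (mt detZ_eq_zero_iff.1 hvw), hα₁, hα₂, hβ₁, hβ₂⟩

/-- existence of a positive integer `n` with `δ ≤ n ≤ (m−1)/δ` such that
for mutually nonparallel `u, v, w` from `U(K) ∪ U(−K)` (or primitive vectors parallel to
edges of the convex hull of `K`) one has `n·u = αv + βw` with `1 ≤ |α| ≤ m − 1` and
`1 ≤ |β| ≤ m − 1`. -/
theorem exists_good_multiple
    (K : Set Z2) (hKfin : K.Finite) (hKconv : latticeConvex K) (hKspan : spans K)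
    (hm : discK K ^ 2 + discK K + 1 ≤ mm K) :
    ∃ n : ℕ, 0 < n ∧ discK K ≤ (n : ℝ≥0∞) ∧ (n : ℝ≥0∞) ≤ (mm K - 1) / discK K ∧
      ∀ u v w : Z2,
        ¬ ParallelZ u v → ¬ ParallelZ u w → ¬ ParallelZ v w →
        ((u ∈ normals K ∪ normals (negSet K) ∧ v ∈ normals K ∪ normals (negSet K) ∧
            w ∈ normals K ∪ normals (negSet K)) ∨
          (primitive u ∧ primitive v ∧ primitive w ∧
            parEdgeHull K u ∧ parEdgeHull K v ∧ parEdgeHull K w)) →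
        ∃ α β : ℝ, (n : ℝ) • toR u = α • toR v + β • toR w ∧
          1 ≤ |α| ∧ ENNReal.ofReal |α| ≤ mm K - 1 ∧
          1 ≤ |β| ∧ ENNReal.ofReal |β| ≤ mm K - 1 :=
  exists_good_multiple_general K hKfin hKspan hm
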